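/- Let Δ be a countable discrete group and let f ∈ ℤΔ be invertible in ℓ¹(Δ,ℝ) (equivalently, the principal algebraic Δ-action α_f is expansive). Let w^△ : Δ → ℝ be the ℓ¹-inverse of f*, where f*(δ) = f(δ⁻¹), and let β : ℝ → ℝ/ℤ denote reduction modulo 1 applied coordinatewise. Call t ∈ X_f homoclinic if for every ε > 0 the set { γ ∈ Δ : d(t_γ, 0) ≥ ε } is finite, where d is the quotient metric on ℝ/ℤ. Then every homoclinic point t ∈ X_f is a finite integral combination of left translates of the fundamental homoclinic point t^△ = β(w^△): there exists a finitely supported g : Δ → ℤ with t = β(g·w^△), where (g·w^△)(γ) = Σ_{δ∈Δ} g(γδ⁻¹)·w^△(δ). -/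

import Mathlib

open MeasureTheory Filter



/-- The additive circle `ℝ/ℤ`. -/
abbrev T1 : Type := AddCircle (1 : ℝ)

variable {Δ : Type*} [Group Δ]

/-- For `f` in the integral group ring `ℤΔ`, the closed shift-invariant subgroup
`X_f = { t ∈ (ℝ/ℤ)^Δ : ∑_δ f(δ) • t(θδ) = 0 for all θ }`. -/
noncomputable def Xf (f : MonoidAlgebra ℤ Δ) : AddSubgroup (Δ → T1) where
  carrier := {t | ∀ θ : Δ, ∑ δ ∈ f.coeff.support, f.coeff δ • t (θ * δ) = 0}
  zero_mem' := by intro θ; simp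
  add_mem' := by
    intro a b ha hb θ
    simp only [Pi.add_apply, smul_add, Finset.sum_add_distrib]
    rw [ha θ, hb θ, add_zero]
  neg_mem' := by
    intro a ha θ
    simp only [Pi.neg_apply, smul_neg]
    rw [Finset.sum_neg_distrib, ha θ, neg_zero]

/-- The left shift action: `(γ · t)(δ) = t(γ⁻¹ δ)`. -/
def shift (γ : Δ) (t : Δ → T1) : Δ → T1 := fun δ => t (γ⁻¹ * δ)

theorem shift_mem {f : MonoidAlgebra ℤ Δ} (γ : Δ) {t : Δ → T1} (ht : t ∈ Xf f) :
    shift γ t ∈ Xf f := by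
  intro θ
  simpa [shift, mul_assoc] using ht (γ⁻¹ * θ)

/-- The principal algebraic `Δ`-action `α_f` on `X_f`. -/
def shiftX (f : MonoidAlgebra ℤ Δ) (γ : Δ) : ↥(Xf f) → ↥(Xf f) :=
  fun t => ⟨shift γ t.1, shift_mem γ t.2⟩

variable [DecidableEq Δ]

/-- `w : Δ → ℝ` is a two-sided `ℓ¹`-inverse of `f ∈ ℤΔ`. -/
def IsL1Inverse (f : MonoidAlgebra ℤ Δ) (w : Δ → ℝ) : Prop :=
  Summable (fun δ => |w δ|) ∧
  (∀ γ : Δ, ∑ δ ∈ f.coeff.support, (f.coeff δ : ℝ) * w (δ⁻¹ * γ) = if γ = 1 then 1 else 0) ∧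
  (∀ γ : Δ, ∑ δ ∈ f.coeff.support, w (γ * δ⁻¹) * (f.coeff δ : ℝ) = if γ = 1 then 1 else 0)

/-- `f ∈ ℤΔ` is invertible in `ℓ¹(Δ,ℝ)`. -/
def L1Invertible (f : MonoidAlgebra ℤ Δ) : Prop :=
  ∃ w : Δ → ℝ, IsL1Inverse f w

/-- The principal algebraic `Δ`-action `α_f` is expansive: there is a neighborhood `U`
of `0` in `X_f` with `⋂_γ γ·U = {0}`. -/
def ExpansiveAction (f : MonoidAlgebra ℤ Δ) : Prop :=
  ∃ U : Set ↥(Xf f), U ∈ nhds 0 ∧ (⋂ γ : Δ, shiftX f γ '' U) = {0}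

/-- `f* ∈ ℤΔ`, given by `f*(δ) = f(δ⁻¹)`. -/
def fstar (f : MonoidAlgebra ℤ Δ) : MonoidAlgebra ℤ Δ :=
  MonoidAlgebra.ofCoeff (Finsupp.equivMapDomain (Equiv.inv Δ) f.coeff)

/-- The action `α_f` is mixing with respect to `μ`. -/
def MixingAction (f : MonoidAlgebra ℤ Δ) (μ : Measure ↥(Xf f)) : Prop :=
  ∀ E F : Set ↥(Xf f), MeasurableSet E → MeasurableSet F →
    Tendsto (fun γ : Δ => μ ((shiftX f γ '' E) ∩ F)) cofinite (nhds (μ E * μ F))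

/-! Lift a homoclinic point `t ∈ X_f` to `v : Δ → ℝ` with `|v| ≤ 1/2` and `v → 0` at infinity.
Then `n = v · f*` is integer-valued because `t ∈ X_f`, and it tends to `0`, so it is finitely
supported; since `w^△` inverts `f*`, `n · w^△ = v · f* · w^△ = v`, which reduces to `t` mod 1. -/

theorem AddCircle.exists_coe_eq_abs_eq_norm (p : ℝ) (x : AddCircle p) :
    ∃ r : ℝ, (r : AddCircle p) = x ∧ |r| = ‖x‖ := by
  obtain ⟨y, rfl⟩ := QuotientAddGroup.mk_surjective x
  refine ⟨y - round (p⁻¹ * y) * p, ?_, (AddCircle.norm_eq p).symm⟩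
  rw [AddCircle.coe_sub, sub_eq_self, AddCircle.coe_eq_zero_iff]
  exact ⟨round (p⁻¹ * y), zsmul_eq_mul _ _⟩

theorem tendsto_cofinite_zero_iff_finite_le_norm {α E : Type*} [SeminormedAddGroup E]
    {u : α → E} : Tendsto u cofinite (nhds 0) ↔ ∀ ε : ℝ, 0 < ε → {a | ε ≤ ‖u a‖}.Finite := by
  simp only [NormedAddGroup.tendsto_nhds_zero, eventually_cofinite, not_lt]

theorem Int.finite_support_of_tendsto_cofinite {α : Type*} {n : α → ℤ}
    (hn : Tendsto (fun a => (n a : ℝ)) cofinite (nhds 0)) : (Function.support n).Finite := by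
  have hzero : ∀ᶠ a in cofinite, n a = 0 := by
    filter_upwards [(tendsto_zero_iff_abs_tendsto_zero _).1 hn |>.eventually (gt_mem_nhds one_pos)]
      with a ha
    have habs : ((|n a| : ℤ) : ℝ) < 1 := by simpa using ha
    exact Int.abs_lt_one_iff.1 (by exact_mod_cast habs)
  exact eventually_cofinite.1 hzero

theorem summable_mul_of_abs_le {ι : Type*} {v w : ι → ℝ} {C : ℝ} (hv : ∀ i, |v i| ≤ C)
    (hw : Summable fun i => |w i|) : Summable fun i => v i * w i :=
  Summable.of_norm_bounded (hw.mul_left C) fun i => by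
    rw [Real.norm_eq_abs, abs_mul]
    exact mul_le_mul_of_nonneg_right (hv i) (abs_nonneg _)

section GroupRing

variable {G : Type*} [Group G]

/-- The convolution `v · f*`, where `f*(δ) = f(δ⁻¹)`. -/
noncomputable def mulStar (v : G → ℝ) (f : MonoidAlgebra ℤ G) (s : G) : ℝ :=
  ∑ η ∈ f.coeff.support, (f.coeff η : ℝ) * v (s * η)

theorem exists_int_eq_mulStar_of_mem_Xf {f : MonoidAlgebra ℤ G} {v : G → ℝ}
    (hv : (fun γ => (v γ : T1)) ∈ Xf f) (s : G) : ∃ n : ℤ, (n : ℝ) = mulStar v f s := by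
  have hzero : ((mulStar v f s : ℝ) : T1) = 0 := by
    simpa [mulStar, ← zsmul_eq_mul] using hv s
  obtain ⟨n, hn⟩ := (AddCircle.coe_eq_zero_iff 1).1 hzero
  exact ⟨n, by simpa using hn⟩

theorem tendsto_mulStar_cofinite {v : G → ℝ} (hv : Tendsto v cofinite (nhds 0))
    (f : MonoidAlgebra ℤ G) : Tendsto (mulStar v f) cofinite (nhds 0) := by
  have hshift : ∀ η : G, Tendsto (fun s => v (s * η)) cofinite (nhds 0) :=
    fun η => hv.comp (mul_left_injective η).tendsto_cofinite
  unfold mulStar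
  simpa only [mul_zero, Finset.sum_const_zero] using
    tendsto_finsetSum f.coeff.support fun η _ => (hshift η).const_mul (f.coeff η : ℝ)

variable [DecidableEq G]

theorem sum_coeff_mul_apply_mul_of_isL1Inverse_fstar {f : MonoidAlgebra ℤ G} {w : G → ℝ}
    (hw : IsL1Inverse (fstar f) w) (γ : G) :
    ∑ η ∈ f.coeff.support, (f.coeff η : ℝ) * w (η * γ) = if γ = 1 then 1 else 0 := by
  have hsupp : (fstar f).coeff.support = f.coeff.support.map (Equiv.inv G).toEmbedding := rfl
  have h := hw.2.1 γ
  rw [hsupp, Finset.sum_map] at h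
  simpa [fstar, Finsupp.equivMapDomain_apply] using h

theorem tsum_mulStar_mul_eq {f : MonoidAlgebra ℤ G} {v w : G → ℝ} {C : ℝ}
    (hv : ∀ u, |v u| ≤ C) (hw : Summable fun δ => |w δ|)
    (hfw : ∀ γ, ∑ η ∈ f.coeff.support, (f.coeff η : ℝ) * w (η * γ) = if γ = 1 then 1 else 0)
    (γ : G) : ∑' δ, mulStar v f (γ * δ⁻¹) * w δ = v γ := by
  let e : G → G ≃ G := fun η => ((Equiv.inv G).trans (Equiv.mulLeft η)).trans (Equiv.mulRight γ)
  have hwe : ∀ η, Summable fun u => |w (η * (u⁻¹ * γ))| := fun η =>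
    ((e η).summable_iff.2 hw).congr fun u => by simp [e, mul_assoc]
  have hreindex : ∀ η, ∑' δ, (f.coeff η : ℝ) * (v (γ * δ⁻¹ * η) * w δ)
      = ∑' u, (f.coeff η : ℝ) * (v u * w (η * (u⁻¹ * γ))) := by
    intro η
    rw [← (e η).tsum_eq]
    congr! 4 with u <;> simp [e, mul_assoc]
  calc ∑' δ, mulStar v f (γ * δ⁻¹) * w δ
      = ∑' δ, ∑ η ∈ f.coeff.support, (f.coeff η : ℝ) * (v (γ * δ⁻¹ * η) * w δ) := by
        simp only [mulStar, Finset.sum_mul, mul_assoc]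
    _ = ∑ η ∈ f.coeff.support, ∑' u, (f.coeff η : ℝ) * (v u * w (η * (u⁻¹ * γ))) := by
        rw [Summable.tsum_finsetSum fun η _ =>
          (summable_mul_of_abs_le (fun δ => hv (γ * δ⁻¹ * η)) hw).mul_left _]
        exact Finset.sum_congr rfl fun η _ => hreindex η
    _ = ∑' u, v u * if u⁻¹ * γ = 1 then 1 else 0 := by
        rw [← Summable.tsum_finsetSum fun η _ =>
          (summable_mul_of_abs_le hv (hwe η)).mul_left _]
        refine tsum_congr fun u => ?_
        rw [← hfw, Finset.mul_sum]
        exact Finset.sum_congr rfl fun η _ => by ring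
    _ = v γ := by
        rw [tsum_eq_single γ fun u hu => by simp [inv_mul_eq_one, hu]]
        simp

end GroupRing

theorem homoclinic_points_generated_by_fundamental_general
    {Δ : Type*} [Group Δ] [DecidableEq Δ]
    (f : MonoidAlgebra ℤ Δ) (w : Δ → ℝ) (hw : IsL1Inverse (fstar f) w)
    (t : Δ → T1) (ht : t ∈ Xf f)
    (hhom : ∀ ε : ℝ, 0 < ε → {γ : Δ | ε ≤ ‖t γ‖}.Finite) :
    ∃ g : Δ →₀ ℤ, ∀ γ : Δ, t γ = ↑(∑' δ : Δ, (g (γ * δ⁻¹) : ℝ) * w δ) := by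
  choose v hv_coe hv_abs using fun γ => AddCircle.exists_coe_eq_abs_eq_norm 1 (t γ)
  have hv_bdd : ∀ γ, |v γ| ≤ 1 / 2 := fun γ => by
    simpa [hv_abs] using AddCircle.norm_le_half_period 1 one_ne_zero (x := t γ)
  have hv_lim : Tendsto v cofinite (nhds 0) := by
    simpa [tendsto_cofinite_zero_iff_finite_le_norm, hv_abs] using hhom
  have hv_mem : (fun γ => (v γ : T1)) ∈ Xf f := by simpa only [hv_coe] using ht
  choose n hn using exists_int_eq_mulStar_of_mem_Xf hv_mem
  have hn_fin : (Function.support n).Finite :=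
    Int.finite_support_of_tendsto_cofinite <| by
      simpa only [hn] using tendsto_mulStar_cofinite hv_lim f
  refine ⟨Finsupp.ofSupportFinite n hn_fin, fun γ => ?_⟩
  rw [← hv_coe γ, ← tsum_mulStar_mul_eq hv_bdd hw.1
    (sum_coeff_mul_apply_mul_of_isL1Inverse_fstar hw) γ]
  simp only [Finsupp.ofSupportFinite_coe, hn]

/-- For `f ∈ ℤΔ` invertible in `ℓ¹(Δ,ℝ)` with `w^△` the `ℓ¹`-inverse of
`f*`, every homoclinic point of `α_f` is a finite integral combination of left translates of
the fundamental homoclinic point `t^△ = β(w^△)`. -/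
theorem homoclinic_points_generated_by_fundamental
    {Δ : Type*} [Group Δ] [Countable Δ] [DecidableEq Δ]
    (f : MonoidAlgebra ℤ Δ) (w : Δ → ℝ) (hw : IsL1Inverse (fstar f) w)
    (t : Δ → T1) (ht : t ∈ Xf f)
    (hhom : ∀ ε : ℝ, 0 < ε → {γ : Δ | ε ≤ ‖t γ‖}.Finite) :
    ∃ g : Δ →₀ ℤ, ∀ γ : Δ, t γ = ↑(∑' δ : Δ, (g (γ * δ⁻¹) : ℝ) * w δ) :=
  homoclinic_points_generated_by_fundamental_general f w hw t ht hhom
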